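/- arXiv:2604.07202 — 4 statements merged into one kernel-verified Lean document; each statement's English description precedes it below -/
import Mathlib

section
/- Let n, m ≥ 1 and let A be a symmetric real (n+m)×(n+m) block matrix A = [[A₁₁, A₂₁ᵀ],[A₂₁, A₂₂]] with A₁₁ invertible, and set S_A := A₂₂ − A₂₁A₁₁⁻¹A₂₁ᵀ. Let M be a symmetric positive definite (n+m)×(n+m) matrix and M̄ a symmetric positive definite m×m matrix. Assume there exist constants c₁, c₂, c_l, c_u > 0 such that: (i) |xᵀAy| ≤ c₁‖x‖_M‖y‖_M for all x, y ∈ ℝ^{n+m}; (ii) for every x ∈ ℝ^{n+m} there exists y ≠ 0 with xᵀAy ≥ c₂‖x‖_M‖y‖_M; (iii) ‖(x₁, x̄)‖_M ≥ c_l‖x̄‖_{M̄} for every x₁ ∈ ℝⁿ and x̄ ∈ ℝᵐ; (iv) ‖(−A₁₁⁻¹A₂₁ᵀx̄, x̄)‖_M ≤ c_u‖x̄‖_{M̄} for every x̄ ∈ ℝᵐ. Then |x̄ᵀS_Aȳ| ≤ c₁c_u²‖x̄‖_{M̄}‖ȳ‖_{M̄} for all x̄, ȳ ∈ ℝᵐ,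 and for every x̄ ∈ ℝᵐ there exists ȳ ≠ 0 in ℝᵐ with x̄ᵀS_Aȳ ≥ c_l²c₂‖x̄‖_{M̄}‖ȳ‖_{M̄}. -/
/-!
The extension `E x̄ = (-A₁₁⁻¹A₂₁ᵀx̄, x̄)` of a face vector satisfies, as `A₁₁` is symmetric,
`E x̄ᵀ A = (0, x̄ᵀ S_A)`, so `E x̄ᵀ A y = x̄ᵀ S_A ȳ` for every `y = (y₁, ȳ)`. Boundedness of `S_A`
then follows from (i) at `(E x̄, E ȳ)` together with (iv), and inf-sup stability from (ii) at
`E x̄` together with (iii), which bounds both `‖E x̄‖_M` and `‖y‖_M` from below by the `M̄`-norms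
of their face parts.
-/

open Matrix

/-- The norm on `k → ℝ` induced by a (positive definite) matrix `M`:
`‖x‖_M = (xᵀ M x)^{1/2}`. -/
noncomputable def mnorm {k : Type*} [Fintype k] (M : Matrix k k ℝ) (x : k → ℝ) : ℝ :=
  Real.sqrt (x ⬝ᵥ M.mulVec x)

section SchurComplement

variable {R ι κ : Type*} [CommRing R] [Fintype ι] [Fintype κ] [DecidableEq ι]
  {A₁₁ : Matrix ι ι R} (A₁₂ : Matrix ι κ R) (A₂₁ : Matrix κ ι R) (A₂₂ : Matrix κ κ R)

theorem sumElim_vecMul_fromBlocks_eq_schurComplement (hA₁₁ : IsUnit A₁₁.det) (x : κ → R) :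
    Sum.elim (-(x ᵥ* A₂₁ ᵥ* A₁₁⁻¹)) x ᵥ* fromBlocks A₁₁ A₁₂ A₂₁ A₂₂ =
      Sum.elim (0 : ι → R) (x ᵥ* (A₂₂ - A₂₁ * A₁₁⁻¹ * A₁₂)) := by
  rw [vecMul_fromBlocks, Sum.elim_comp_inl, Sum.elim_comp_inr, neg_vecMul, neg_vecMul,
    vecMul_vecMul, vecMul_vecMul, Matrix.mul_assoc, nonsing_inv_mul _ hA₁₁, Matrix.mul_one,
    vecMul_sub, vecMul_vecMul, vecMul_vecMul]
  congr 1 <;> abel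

theorem sumElim_dotProduct_fromBlocks_mulVec_eq_schurComplement (hA₁₁ : IsUnit A₁₁.det)
    (x : κ → R) (y₁ : ι → R) (y : κ → R) :
    Sum.elim (-(x ᵥ* A₂₁ ᵥ* A₁₁⁻¹)) x ⬝ᵥ fromBlocks A₁₁ A₁₂ A₂₁ A₂₂ *ᵥ Sum.elim y₁ y =
      x ⬝ᵥ (A₂₂ - A₂₁ * A₁₁⁻¹ * A₁₂) *ᵥ y := by
  rw [dotProduct_mulVec, sumElim_vecMul_fromBlocks_eq_schurComplement _ _ _ hA₁₁,
    sumElim_dotProduct_sumElim, zero_dotProduct, zero_add, dotProduct_mulVec]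

end SchurComplement

section Mnorm

variable {k : Type*} [Fintype k]

theorem mnorm_nonneg (M : Matrix k k ℝ) (x : k → ℝ) : 0 ≤ mnorm M x :=
  Real.sqrt_nonneg _

theorem mnorm_pos {M : Matrix k k ℝ} (hM : M.PosDef) {x : k → ℝ} (hx : x ≠ 0) :
    0 < mnorm M x :=
  Real.sqrt_pos.mpr (by simpa using hM.dotProduct_mulVec_pos hx)

end Mnorm

section Transfer

variable {ι κ : Type*} [Fintype ι] [Fintype κ] {A M : Matrix (ι ⊕ κ) (ι ⊕ κ) ℝ}
  {S Mb : Matrix κ κ ℝ} {e : (κ → ℝ) → ι → ℝ}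

theorem abs_dotProduct_mulVec_le_of_extension {c₁ cu : ℝ} (hc₁ : 0 ≤ c₁)
    (hbound : ∀ x y, |x ⬝ᵥ A *ᵥ y| ≤ c₁ * mnorm M x * mnorm M y)
    (hup : ∀ x, mnorm M (Sum.elim (e x) x) ≤ cu * mnorm Mb x)
    (hext : ∀ x y₁ y, Sum.elim (e x) x ⬝ᵥ A *ᵥ Sum.elim y₁ y = x ⬝ᵥ S *ᵥ y) (x y : κ → ℝ) :
    |x ⬝ᵥ S *ᵥ y| ≤ c₁ * cu ^ 2 * mnorm Mb x * mnorm Mb y := by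
  have hnorms : mnorm M (Sum.elim (e x) x) * mnorm M (Sum.elim (e y) y) ≤
      cu * mnorm Mb x * (cu * mnorm Mb y) :=
    mul_le_mul (hup x) (hup y) (mnorm_nonneg _ _) ((mnorm_nonneg _ _).trans (hup x))
  calc |x ⬝ᵥ S *ᵥ y|
      = |Sum.elim (e x) x ⬝ᵥ A *ᵥ Sum.elim (e y) y| := by rw [hext]
    _ ≤ c₁ * mnorm M (Sum.elim (e x) x) * mnorm M (Sum.elim (e y) y) := hbound _ _
    _ ≤ c₁ * (cu * mnorm Mb x * (cu * mnorm Mb y)) := by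
      rw [mul_assoc]; exact mul_le_mul_of_nonneg_left hnorms hc₁
    _ = c₁ * cu ^ 2 * mnorm Mb x * mnorm Mb y := by ring

theorem exists_le_dotProduct_mulVec_of_extension [Nonempty κ] {c₂ cl : ℝ} (hM : M.PosDef)
    (hc₂ : 0 < c₂) (hcl : 0 ≤ cl)
    (hinfsup : ∀ x, ∃ y, y ≠ 0 ∧ c₂ * mnorm M x * mnorm M y ≤ x ⬝ᵥ A *ᵥ y)
    (hlow : ∀ y₁ y, cl * mnorm Mb y ≤ mnorm M (Sum.elim y₁ y))
    (hext : ∀ x y₁ y, Sum.elim (e x) x ⬝ᵥ A *ᵥ Sum.elim y₁ y = x ⬝ᵥ S *ᵥ y) (x : κ → ℝ) :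
    ∃ y, y ≠ 0 ∧ cl ^ 2 * c₂ * mnorm Mb x * mnorm Mb y ≤ x ⬝ᵥ S *ᵥ y := by
  rcases eq_or_ne x 0 with rfl | hx
  · obtain ⟨y, hy⟩ := exists_ne (0 : κ → ℝ)
    exact ⟨y, hy, by simp [mnorm]⟩
  obtain ⟨z, hz, hinf⟩ := hinfsup (Sum.elim (e x) x)
  have hval := hext x (z ∘ Sum.inl) (z ∘ Sum.inr)
  have hz_low := hlow (z ∘ Sum.inl) (z ∘ Sum.inr)
  rw [Sum.elim_comp_inl_inr] at hval hz_low
  rw [hval] at hinf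
  have hext_ne : Sum.elim (e x) x ≠ 0 := fun h ↦ hx (by simpa using congrArg (· ∘ Sum.inr) h)
  have hpos : 0 < c₂ * mnorm M (Sum.elim (e x) x) * mnorm M z :=
    mul_pos (mul_pos hc₂ (mnorm_pos hM hext_ne)) (mnorm_pos hM hz)
  refine ⟨z ∘ Sum.inr, fun h ↦ ?_, ?_⟩
  · rw [h, mulVec_zero, dotProduct_zero] at hinf
    exact hpos.not_ge hinf
  have hnorms : cl * mnorm Mb x * (cl * mnorm Mb (z ∘ Sum.inr)) ≤
      mnorm M (Sum.elim (e x) x) * mnorm M z :=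
    mul_le_mul (hlow _ _) hz_low (mul_nonneg hcl (mnorm_nonneg _ _)) (mnorm_nonneg _ _)
  calc cl ^ 2 * c₂ * mnorm Mb x * mnorm Mb (z ∘ Sum.inr)
      = c₂ * (cl * mnorm Mb x * (cl * mnorm Mb (z ∘ Sum.inr))) := by ring
    _ ≤ c₂ * (mnorm M (Sum.elim (e x) x) * mnorm M z) :=
      mul_le_mul_of_nonneg_left hnorms hc₂.le
    _ ≤ x ⬝ᵥ S *ᵥ (z ∘ Sum.inr) := by rw [← mul_assoc]; exact hinf

end Transfer

theorem schur_complement_uniform_bounded_and_infsup_general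
    (n m : ℕ) (hm : 1 ≤ m)
    (A₁₁ : Matrix (Fin n) (Fin n) ℝ) (A₂₁ : Matrix (Fin m) (Fin n) ℝ)
    (A₂₂ : Matrix (Fin m) (Fin m) ℝ)
    (hAsymm : (Matrix.fromBlocks A₁₁ A₂₁ᵀ A₂₁ A₂₂).IsSymm)
    (hA₁₁ : IsUnit A₁₁.det)
    (M : Matrix (Fin n ⊕ Fin m) (Fin n ⊕ Fin m) ℝ) (hM : M.PosDef)
    (Mb : Matrix (Fin m) (Fin m) ℝ)
    (c₁ c₂ cl cu : ℝ) (hc₁ : 0 < c₁) (hc₂ : 0 < c₂) (hcl : 0 < cl)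
    -- (i) uniform boundedness of the hybridizable system
    (hbound : ∀ x y : Fin n ⊕ Fin m → ℝ,
      |x ⬝ᵥ (Matrix.fromBlocks A₁₁ A₂₁ᵀ A₂₁ A₂₂).mulVec y| ≤ c₁ * mnorm M x * mnorm M y)
    -- (ii) uniform inf-sup stability of the hybridizable system
    (hinfsup : ∀ x : Fin n ⊕ Fin m → ℝ, ∃ y : Fin n ⊕ Fin m → ℝ, y ≠ 0 ∧
      c₂ * mnorm M x * mnorm M y ≤ x ⬝ᵥ (Matrix.fromBlocks A₁₁ A₂₁ᵀ A₂₁ A₂₂).mulVec y)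
    -- (iii) lower face-norm condition
    (hlow : ∀ (x₁ : Fin n → ℝ) (xb : Fin m → ℝ),
      cl * mnorm Mb xb ≤ mnorm M (Sum.elim x₁ xb))
    -- (iv) upper face-norm condition
    (hup : ∀ xb : Fin m → ℝ,
      mnorm M (Sum.elim (-(A₁₁⁻¹.mulVec (A₂₁ᵀ.mulVec xb))) xb) ≤ cu * mnorm Mb xb) :
    (∀ xb yb : Fin m → ℝ,
      |xb ⬝ᵥ (A₂₂ - A₂₁ * A₁₁⁻¹ * A₂₁ᵀ).mulVec yb| ≤ c₁ * cu ^ 2 * mnorm Mb xb * mnorm Mb yb) ∧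
    (∀ xb : Fin m → ℝ, ∃ yb : Fin m → ℝ, yb ≠ 0 ∧
      cl ^ 2 * c₂ * mnorm Mb xb * mnorm Mb yb ≤
        xb ⬝ᵥ (A₂₂ - A₂₁ * A₁₁⁻¹ * A₂₁ᵀ).mulVec yb) := by
  have hinv_symm : (A₁₁⁻¹)ᵀ = A₁₁⁻¹ := (isSymm_fromBlocks_iff.mp hAsymm).1.inv
  have hext : ∀ x y₁ y, Sum.elim (-(A₁₁⁻¹ *ᵥ A₂₁ᵀ *ᵥ x)) x ⬝ᵥ
      fromBlocks A₁₁ A₂₁ᵀ A₂₁ A₂₂ *ᵥ Sum.elim y₁ y = x ⬝ᵥ (A₂₂ - A₂₁ * A₁₁⁻¹ * A₂₁ᵀ) *ᵥ y := by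
    intro x y₁ y
    rw [← hinv_symm, mulVec_transpose, mulVec_transpose, hinv_symm]
    exact sumElim_dotProduct_fromBlocks_mulVec_eq_schurComplement _ _ _ hA₁₁ x y₁ y
  have : Nonempty (Fin m) := ⟨⟨0, hm⟩⟩
  exact ⟨abs_dotProduct_mulVec_le_of_extension hc₁.le hbound hup hext,
    exists_le_dotProduct_mulVec_of_extension hM hc₂ hcl.le hinfsup hlow hext⟩

/-- Generalized face-norm condition: parameter-robust preconditioning of the
statically condensed (Schur complement) system (matrix form of Theorem 2.1). -/
theorem schur_complement_uniform_bounded_and_infsup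
    (n m : ℕ) (hn : 1 ≤ n) (hm : 1 ≤ m)
    (A₁₁ : Matrix (Fin n) (Fin n) ℝ) (A₂₁ : Matrix (Fin m) (Fin n) ℝ)
    (A₂₂ : Matrix (Fin m) (Fin m) ℝ)
    (hAsymm : (Matrix.fromBlocks A₁₁ A₂₁ᵀ A₂₁ A₂₂).IsSymm)
    (hA₁₁ : IsUnit A₁₁.det)
    (M : Matrix (Fin n ⊕ Fin m) (Fin n ⊕ Fin m) ℝ) (hM : M.PosDef)
    (Mb : Matrix (Fin m) (Fin m) ℝ) (hMb : Mb.PosDef)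
    (c₁ c₂ cl cu : ℝ) (hc₁ : 0 < c₁) (hc₂ : 0 < c₂) (hcl : 0 < cl) (hcu : 0 < cu)
    -- (i) uniform boundedness of the hybridizable system
    (hbound : ∀ x y : Fin n ⊕ Fin m → ℝ,
      |x ⬝ᵥ (Matrix.fromBlocks A₁₁ A₂₁ᵀ A₂₁ A₂₂).mulVec y| ≤ c₁ * mnorm M x * mnorm M y)
    -- (ii) uniform inf-sup stability of the hybridizable system
    (hinfsup : ∀ x : Fin n ⊕ Fin m → ℝ, ∃ y : Fin n ⊕ Fin m → ℝ, y ≠ 0 ∧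
      c₂ * mnorm M x * mnorm M y ≤ x ⬝ᵥ (Matrix.fromBlocks A₁₁ A₂₁ᵀ A₂₁ A₂₂).mulVec y)
    -- (iii) lower face-norm condition
    (hlow : ∀ (x₁ : Fin n → ℝ) (xb : Fin m → ℝ),
      cl * mnorm Mb xb ≤ mnorm M (Sum.elim x₁ xb))
    -- (iv) upper face-norm condition
    (hup : ∀ xb : Fin m → ℝ,
      mnorm M (Sum.elim (-(A₁₁⁻¹.mulVec (A₂₁ᵀ.mulVec xb))) xb) ≤ cu * mnorm Mb xb) :
    (∀ xb yb : Fin m → ℝ,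
      |xb ⬝ᵥ (A₂₂ - A₂₁ * A₁₁⁻¹ * A₂₁ᵀ).mulVec yb| ≤ c₁ * cu ^ 2 * mnorm Mb xb * mnorm Mb yb) ∧
    (∀ xb : Fin m → ℝ, ∃ yb : Fin m → ℝ, yb ≠ 0 ∧
      cl ^ 2 * c₂ * mnorm Mb xb * mnorm Mb yb ≤
        xb ⬝ᵥ (A₂₂ - A₂₁ * A₁₁⁻¹ * A₂₁ᵀ).mulVec yb) :=
  schur_complement_uniform_bounded_and_infsup_general n m hm A₁₁ A₂₁ A₂₂ hAsymm hA₁₁ M hM Mb c₁ c₂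
    cl cu hc₁ hc₂ hcl hbound hinfsup hlow hup
end

section
/- Let ν, τ > 0. Let Pˢ = [[Pˢ₁₁, 0],[0, Pˢ₂₂]] be a symmetric real (n+m)×(n+m) block-diagonal matrix with Pˢ₁₁ positive semidefinite and Pˢ₂₂ symmetric, and let Pᵈ = [[Pᵈ₁₁, (Pᵈ₂₁)ᵀ],[Pᵈ₂₁, Pᵈ₂₂]] be a symmetric real (n+m)×(n+m) block matrix with Pᵈ₁₁ positive definite; set S_{Pᵈ} := Pᵈ₂₂ − Pᵈ₂₁(Pᵈ₁₁)⁻¹(Pᵈ₂₁)ᵀ. Then for every q ∈ ℝ^{n+m} with second block q̄ ∈ ℝᵐ, the infimum over all splittings q = q' + q'' in ℝ^{n+m} of ν⁻¹(q')ᵀPˢq' + τ⁻¹(q'')ᵀPᵈq'' is at least the infimum over all splittings q̄ = q̄₁ + q̄₂ in ℝᵐ of ν⁻¹q̄₁ᵀPˢ₂₂q̄₁ + τ⁻¹q̄₂ᵀS_{Pᵈ}q̄₂. -/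
/-!
Restricting a splitting `q = q' + q''` to the second blocks gives a splitting of `q̄`. This does
not increase either cost: the block-diagonal form loses the nonnegative `Pˢ₁₁`-term, and by
completing the square the full `Pᵈ`-form equals the Schur-complement form of the second block
plus a `Pᵈ₁₁`-form, which is nonnegative.
-/

open Matrix

namespace Matrix

variable {m n R : Type*} [Fintype m] [Fintype n]
  [CommRing R] [PartialOrder R] [StarRing R] [StarOrderedRing R]

theorem PosSemidef.dotProduct_inr_mulVec_le_fromBlocks_zero {A : Matrix m m R}
    (hA : A.PosSemidef) (D : Matrix n n R) (x : m ⊕ n → R) :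
    star (x ∘ Sum.inr) ⬝ᵥ D *ᵥ (x ∘ Sum.inr) ≤ star x ⬝ᵥ fromBlocks A 0 0 D *ᵥ x := by
  rw [← Sum.elim_comp_inl_inr x, fromBlocks_mulVec, Function.star_sumElim,
    sumElim_dotProduct_sumElim]
  simpa using hA.dotProduct_mulVec_nonneg (x ∘ Sum.inl)

theorem PosDef.dotProduct_inr_schur_mulVec_le_fromBlocks [DecidableEq m] {A : Matrix m m R}
    (hA : A.PosDef) [Invertible A] (B : Matrix m n R) (D : Matrix n n R) (x : m ⊕ n → R) :
    star (x ∘ Sum.inr) ⬝ᵥ (D - Bᴴ * A⁻¹ * B) *ᵥ (x ∘ Sum.inr) ≤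
      star x ⬝ᵥ fromBlocks A B Bᴴ D *ᵥ x := by
  have h := schur_complement_eq₁₁ B D (x ∘ Sum.inl) (x ∘ Sum.inr) hA.1
  simp only [Sum.elim_comp_inl_inr, ← dotProduct_mulVec] at h
  rw [h]
  exact le_add_of_nonneg_left (hA.posSemidef.dotProduct_mulVec_nonneg _)

end Matrix

theorem sum_norm_inf_ge_schur_sum_norm_inf_general
    (n m : ℕ) (ν τ : ℝ) (hν : 0 < ν) (hτ : 0 < τ)
    (Ps₁₁ : Matrix (Fin n) (Fin n) ℝ) (Ps₂₂ : Matrix (Fin m) (Fin m) ℝ)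
    (hPs₁₁ : Ps₁₁.PosSemidef)
    (Pd₁₁ : Matrix (Fin n) (Fin n) ℝ) (Pd₂₁ : Matrix (Fin m) (Fin n) ℝ)
    (Pd₂₂ : Matrix (Fin m) (Fin m) ℝ)
    (hPd₁₁ : Pd₁₁.PosDef)
    (q : Fin n ⊕ Fin m → ℝ) :
    (⨅ p : {p : (Fin n ⊕ Fin m → ℝ) × (Fin n ⊕ Fin m → ℝ) // p.1 + p.2 = q},
        ((ν⁻¹ * (p.1.1 ⬝ᵥ (Matrix.fromBlocks Ps₁₁ 0 0 Ps₂₂).mulVec p.1.1) +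
          τ⁻¹ * (p.1.2 ⬝ᵥ (Matrix.fromBlocks Pd₁₁ Pd₂₁ᵀ Pd₂₁ Pd₂₂).mulVec p.1.2) : ℝ) :
          EReal)) ≥
      ⨅ p : {p : (Fin m → ℝ) × (Fin m → ℝ) // p.1 + p.2 = fun i => q (Sum.inr i)},
        ((ν⁻¹ * (p.1.1 ⬝ᵥ Ps₂₂.mulVec p.1.1) +
          τ⁻¹ * (p.1.2 ⬝ᵥ (Pd₂₂ - Pd₂₁ * Pd₁₁⁻¹ * Pd₂₁ᵀ).mulVec p.1.2) : ℝ) : EReal) := by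
  have := hPd₁₁.isUnit.invertible
  refine le_iInf fun ⟨(q', q''), hsplit⟩ => iInf_le_of_le
    ⟨(q' ∘ Sum.inr, q'' ∘ Sum.inr), by rw [← hsplit]; rfl⟩ (EReal.coe_le_coe_iff.mpr ?_)
  have hs := hPs₁₁.dotProduct_inr_mulVec_le_fromBlocks_zero Ps₂₂ q'
  have hd := hPd₁₁.dotProduct_inr_schur_mulVec_le_fromBlocks Pd₂₁ᵀ Pd₂₂ q''
  simp only [star_trivial, conjTranspose_eq_transpose_of_trivial, transpose_transpose] at hs hd
  gcongr

/-- The weighted intersection-sum infimum built from two block operators on the full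
space dominates the one built from their Schur complements on the face space
(inequality (5.11) of the paper, stated with infima in the extended reals). -/
theorem sum_norm_inf_ge_schur_sum_norm_inf
    (n m : ℕ) (ν τ : ℝ) (hν : 0 < ν) (hτ : 0 < τ)
    (Ps₁₁ : Matrix (Fin n) (Fin n) ℝ) (Ps₂₂ : Matrix (Fin m) (Fin m) ℝ)
    (hPs₁₁ : Ps₁₁.PosSemidef) (hPs₂₂ : Ps₂₂.IsSymm)
    (Pd₁₁ : Matrix (Fin n) (Fin n) ℝ) (Pd₂₁ : Matrix (Fin m) (Fin n) ℝ)
    (Pd₂₂ : Matrix (Fin m) (Fin m) ℝ)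
    (hPdsymm : (Matrix.fromBlocks Pd₁₁ Pd₂₁ᵀ Pd₂₁ Pd₂₂).IsSymm)
    (hPd₁₁ : Pd₁₁.PosDef)
    (q : Fin n ⊕ Fin m → ℝ) :
    (⨅ p : {p : (Fin n ⊕ Fin m → ℝ) × (Fin n ⊕ Fin m → ℝ) // p.1 + p.2 = q},
        ((ν⁻¹ * (p.1.1 ⬝ᵥ (Matrix.fromBlocks Ps₁₁ 0 0 Ps₂₂).mulVec p.1.1) +
          τ⁻¹ * (p.1.2 ⬝ᵥ (Matrix.fromBlocks Pd₁₁ Pd₂₁ᵀ Pd₂₁ Pd₂₂).mulVec p.1.2) : ℝ) :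
          EReal)) ≥
      ⨅ p : {p : (Fin m → ℝ) × (Fin m → ℝ) // p.1 + p.2 = fun i => q (Sum.inr i)},
        ((ν⁻¹ * (p.1.1 ⬝ᵥ Ps₂₂.mulVec p.1.1) +
          τ⁻¹ * (p.1.2 ⬝ᵥ (Pd₂₂ - Pd₂₁ * Pd₁₁⁻¹ * Pd₂₁ᵀ).mulVec p.1.2) : ℝ) : EReal) :=
  sum_norm_inf_ge_schur_sum_norm_inf_general n m ν τ hν hτ Ps₁₁ Ps₂₂ hPs₁₁ Pd₁₁ Pd₂₁ Pd₂₂ hPd₁₁ q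
end

section
/- Let A = [[A₁₁, A₂₁ᵀ],[A₂₁, A₂₂]] and P = [[P₁₁, P₂₁ᵀ],[P₂₁, P₂₂]] be symmetric real (n+m)×(n+m) block matrices with A₁₁ and P₁₁ positive definite, and let S_A := A₂₂ − A₂₁A₁₁⁻¹A₂₁ᵀ and S_P := P₂₂ − P₂₁P₁₁⁻¹P₂₁ᵀ. If there exist constants c₁, c₂ > 0 such that c₁ xᵀPx ≤ xᵀAx ≤ c₂ xᵀPx for all x ∈ ℝ^{n+m}, then c₁ x̄ᵀS_Px̄ ≤ x̄ᵀS_Ax̄ ≤ c₂ x̄ᵀS_Px̄ for all x̄ ∈ ℝᵐ. -/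
open Matrix

/- Completing the square in the first block variable shows that the Schur complement is the
partial minimum of the quadratic form, `yᵀ S_A y = min_x (x, y)ᵀ A (x, y)`. Minimising both sides
of `c₁ Q_P ≤ Q_A ≤ c₂ Q_P` over `x` then gives the claim. -/

theorem Monotone.map_le_of_forall_map_le {X α β : Type*} [Preorder α] [Preorder β]
    {φ ψ : α → β} (hφ : Monotone φ) {f g : X → α} {sf sg : α}
    (hf : sf ∈ Set.range f) (hg : sg ∈ lowerBounds (Set.range g))
    (h : ∀ x, φ (g x) ≤ ψ (f x)) : φ sg ≤ ψ sf := by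
  obtain ⟨x, rfl⟩ := hf
  exact (hφ (hg ⟨x, rfl⟩)).trans (h x)

namespace Matrix

variable {k l : Type*} [Fintype k] [DecidableEq k] [Fintype l]

noncomputable def schurComplement (A₁₁ : Matrix k k ℝ) (A₂₁ : Matrix l k ℝ)
    (A₂₂ : Matrix l l ℝ) : Matrix l l ℝ :=
  A₂₂ - A₂₁ * A₁₁⁻¹ * A₂₁ᵀ

theorem sumElim_dotProduct_fromBlocks_mulVec {A₁₁ : Matrix k k ℝ} [Invertible A₁₁]
    (hA : A₁₁.IsHermitian) (A₂₁ : Matrix l k ℝ) (A₂₂ : Matrix l l ℝ) (x : k → ℝ) (y : l → ℝ) :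
    Sum.elim x y ⬝ᵥ fromBlocks A₁₁ A₂₁ᵀ A₂₁ A₂₂ *ᵥ Sum.elim x y =
      (x + (A₁₁⁻¹ * A₂₁ᵀ) *ᵥ y) ⬝ᵥ A₁₁ *ᵥ (x + (A₁₁⁻¹ * A₂₁ᵀ) *ᵥ y) +
        y ⬝ᵥ schurComplement A₁₁ A₂₁ A₂₂ *ᵥ y := by
  simpa [schurComplement, dotProduct_mulVec] using schur_complement_eq₁₁ A₂₁ᵀ A₂₂ x y hA

theorem isLeast_schurComplement {A₁₁ : Matrix k k ℝ} (hA : A₁₁.PosDef)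
    (A₂₁ : Matrix l k ℝ) (A₂₂ : Matrix l l ℝ) (y : l → ℝ) :
    IsLeast (Set.range fun x => Sum.elim x y ⬝ᵥ fromBlocks A₁₁ A₂₁ᵀ A₂₁ A₂₂ *ᵥ Sum.elim x y)
      (y ⬝ᵥ schurComplement A₁₁ A₂₁ A₂₂ *ᵥ y) := by
  have := hA.isUnit.invertible
  simp_rw [sumElim_dotProduct_fromBlocks_mulVec hA.isHermitian]
  refine ⟨⟨-((A₁₁⁻¹ * A₂₁ᵀ) *ᵥ y), by simp⟩, ?_⟩
  rintro _ ⟨x, rfl⟩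
  exact le_add_of_nonneg_left (hA.posSemidef.dotProduct_mulVec_nonneg _)

end Matrix

theorem schur_complement_spectral_equivalence_general
    (n m : ℕ)
    (A₁₁ : Matrix (Fin n) (Fin n) ℝ) (A₂₁ : Matrix (Fin m) (Fin n) ℝ)
    (A₂₂ : Matrix (Fin m) (Fin m) ℝ)
    (P₁₁ : Matrix (Fin n) (Fin n) ℝ) (P₂₁ : Matrix (Fin m) (Fin n) ℝ)
    (P₂₂ : Matrix (Fin m) (Fin m) ℝ)
    (hA₁₁ : A₁₁.PosDef) (hP₁₁ : P₁₁.PosDef)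
    (c₁ c₂ : ℝ) (hc₁ : 0 < c₁)
    (hequiv : ∀ x : Fin n ⊕ Fin m → ℝ,
      c₁ * (x ⬝ᵥ (Matrix.fromBlocks P₁₁ P₂₁ᵀ P₂₁ P₂₂).mulVec x) ≤
          x ⬝ᵥ (Matrix.fromBlocks A₁₁ A₂₁ᵀ A₂₁ A₂₂).mulVec x ∧
        x ⬝ᵥ (Matrix.fromBlocks A₁₁ A₂₁ᵀ A₂₁ A₂₂).mulVec x ≤
          c₂ * (x ⬝ᵥ (Matrix.fromBlocks P₁₁ P₂₁ᵀ P₂₁ P₂₂).mulVec x)) :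
    ∀ xb : Fin m → ℝ,
      c₁ * (xb ⬝ᵥ (P₂₂ - P₂₁ * P₁₁⁻¹ * P₂₁ᵀ).mulVec xb) ≤
          xb ⬝ᵥ (A₂₂ - A₂₁ * A₁₁⁻¹ * A₂₁ᵀ).mulVec xb ∧
        xb ⬝ᵥ (A₂₂ - A₂₁ * A₁₁⁻¹ * A₂₁ᵀ).mulVec xb ≤
          c₂ * (xb ⬝ᵥ (P₂₂ - P₂₁ * P₁₁⁻¹ * P₂₁ᵀ).mulVec xb) := by
  intro y
  have hSA := isLeast_schurComplement hA₁₁ A₂₁ A₂₂ y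
  have hSP := isLeast_schurComplement hP₁₁ P₂₁ P₂₂ y
  exact ⟨(monotone_mul_left_of_nonneg hc₁.le).map_le_of_forall_map_le (ψ := id) hSA.1 hSP.2
      fun x => (hequiv (Sum.elim x y)).1,
    monotone_id.map_le_of_forall_map_le (ψ := (c₂ * ·)) hSP.1 hSA.2
      fun x => (hequiv (Sum.elim x y)).2⟩

/-- Spectral equivalence of two symmetric positive block operators transfers, with the
same constants, to spectral equivalence of their Schur complements (Theorem B.2). -/
theorem schur_complement_spectral_equivalence
    (n m : ℕ)
    (A₁₁ : Matrix (Fin n) (Fin n) ℝ) (A₂₁ : Matrix (Fin m) (Fin n) ℝ)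
    (A₂₂ : Matrix (Fin m) (Fin m) ℝ)
    (P₁₁ : Matrix (Fin n) (Fin n) ℝ) (P₂₁ : Matrix (Fin m) (Fin n) ℝ)
    (P₂₂ : Matrix (Fin m) (Fin m) ℝ)
    (hAsymm : (Matrix.fromBlocks A₁₁ A₂₁ᵀ A₂₁ A₂₂).IsSymm)
    (hPsymm : (Matrix.fromBlocks P₁₁ P₂₁ᵀ P₂₁ P₂₂).IsSymm)
    (hA₁₁ : A₁₁.PosDef) (hP₁₁ : P₁₁.PosDef)
    (c₁ c₂ : ℝ) (hc₁ : 0 < c₁) (hc₂ : 0 < c₂)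
    (hequiv : ∀ x : Fin n ⊕ Fin m → ℝ,
      c₁ * (x ⬝ᵥ (Matrix.fromBlocks P₁₁ P₂₁ᵀ P₂₁ P₂₂).mulVec x) ≤
          x ⬝ᵥ (Matrix.fromBlocks A₁₁ A₂₁ᵀ A₂₁ A₂₂).mulVec x ∧
        x ⬝ᵥ (Matrix.fromBlocks A₁₁ A₂₁ᵀ A₂₁ A₂₂).mulVec x ≤
          c₂ * (x ⬝ᵥ (Matrix.fromBlocks P₁₁ P₂₁ᵀ P₂₁ P₂₂).mulVec x)) :
    ∀ xb : Fin m → ℝ,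
      c₁ * (xb ⬝ᵥ (P₂₂ - P₂₁ * P₁₁⁻¹ * P₂₁ᵀ).mulVec xb) ≤
          xb ⬝ᵥ (A₂₂ - A₂₁ * A₁₁⁻¹ * A₂₁ᵀ).mulVec xb ∧
        xb ⬝ᵥ (A₂₂ - A₂₁ * A₁₁⁻¹ * A₂₁ᵀ).mulVec xb ≤
          c₂ * (xb ⬝ᵥ (P₂₂ - P₂₁ * P₁₁⁻¹ * P₂₁ᵀ).mulVec xb) :=
  schur_complement_spectral_equivalence_general n m A₁₁ A₂₁ A₂₂ P₁₁ P₂₁ P₂₂ hA₁₁ hP₁₁ c₁ c₂ hc₁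
    hequiv
end

section
/- Let B and C be symmetric positive definite real n×n matrices. Then for every q ∈ ℝⁿ, inf{q₁ᵀBq₁ + q₂ᵀCq₂ : q₁, q₂ ∈ ℝⁿ, q₁ + q₂ = q} = qᵀB(B + C)⁻¹Cq. -/
/-!
With `S = B + C`, the splitting `q₁ = S⁻¹Cq`, `q₂ = S⁻¹Bq` is the minimiser: completing the
square gives `q₁ᵀBq₁ + q₂ᵀCq₂ = qᵀ(BS⁻¹C)q + dᵀSd` with `d = q₁ - S⁻¹Cq`, and `dᵀSd ≥ 0`.
-/

open Matrix

namespace Matrix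

variable {ι R : Type*} [Fintype ι]

lemma IsSymm.dotProduct_mulVec_comm [CommSemiring R] {M : Matrix ι ι R} (hM : M.IsSymm)
    (x y : ι → R) : x ⬝ᵥ M *ᵥ y = y ⬝ᵥ M *ᵥ x := by
  rw [dotProduct_mulVec, ← mulVec_transpose, hM.eq, dotProduct_comm]

lemma IsSymm.add_dotProduct_mulVec_add [CommRing R] {M : Matrix ι ι R} (hM : M.IsSymm)
    (x y : ι → R) :
    (x + y) ⬝ᵥ M *ᵥ (x + y) = x ⬝ᵥ M *ᵥ x + 2 * (y ⬝ᵥ M *ᵥ x) + y ⬝ᵥ M *ᵥ y := by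
  simp only [mulVec_add, add_dotProduct, dotProduct_add, hM.dotProduct_mulVec_comm x y]
  ring

variable [DecidableEq ι] [CommRing R] {B C : Matrix ι ι R}

lemma mul_inv_add_mul_comm (h : IsUnit (B + C).det) :
    B * (B + C)⁻¹ * C = C * (B + C)⁻¹ * B :=
  calc B * (B + C)⁻¹ * C = (B + C - C) * (B + C)⁻¹ * C := by rw [add_sub_cancel_right]
    _ = C - C * (B + C)⁻¹ * C := by
        rw [Matrix.sub_mul, Matrix.sub_mul, mul_nonsing_inv _ h, Matrix.one_mul]
    _ = C * (B + C)⁻¹ * (B + C - C) := by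
        rw [Matrix.mul_sub, Matrix.mul_assoc C _ (B + C), nonsing_inv_mul _ h, Matrix.mul_one,
          Matrix.mul_assoc]
    _ = C * (B + C)⁻¹ * B := by rw [add_sub_cancel_right]

lemma inv_add_mul_mulVec_add (h : IsUnit (B + C).det) (q : ι → R) :
    ((B + C)⁻¹ * C) *ᵥ q + ((B + C)⁻¹ * B) *ᵥ q = q := by
  rw [← add_mulVec, ← Matrix.mul_add, add_comm C, nonsing_inv_mul _ h, one_mulVec]

lemma dotProduct_mulVec_add_dotProduct_mulVec_of_add_eq (hB : B.IsSymm) (hC : C.IsSymm)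
    (h : IsUnit (B + C).det) {q₁ q₂ q : ι → R} (hq : q₁ + q₂ = q) :
    q₁ ⬝ᵥ B *ᵥ q₁ + q₂ ⬝ᵥ C *ᵥ q₂ =
      q ⬝ᵥ (B * (B + C)⁻¹ * C) *ᵥ q +
        (q₁ - ((B + C)⁻¹ * C) *ᵥ q) ⬝ᵥ (B + C) *ᵥ (q₁ - ((B + C)⁻¹ * C) *ᵥ q) := by
  set P := B * (B + C)⁻¹ * C
  set a := ((B + C)⁻¹ * C) *ᵥ q
  set b := ((B + C)⁻¹ * B) *ᵥ q
  set d := q₁ - a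
  have hab : a + b = q := inv_add_mul_mulVec_add h q
  have hBa : B *ᵥ a = P *ᵥ q := by rw [mulVec_mulVec, ← Matrix.mul_assoc]
  have hCb : C *ᵥ b = P *ᵥ q := by
    rw [mulVec_mulVec, ← Matrix.mul_assoc, ← mul_inv_add_mul_comm h]
  have hq₁ : q₁ = a + d := (add_sub_cancel a q₁).symm
  have hq₂ : q₂ = b + -d := by rw [eq_sub_of_add_eq' hq, ← hab, hq₁]; abel
  have hPq : a ⬝ᵥ P *ᵥ q + b ⬝ᵥ P *ᵥ q = q ⬝ᵥ P *ᵥ q := by rw [← add_dotProduct, hab]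
  rw [hq₁, hq₂, hB.add_dotProduct_mulVec_add, hC.add_dotProduct_mulVec_add, hBa, hCb,
    ← hPq, add_mulVec, dotProduct_add]
  simp only [mulVec_neg, neg_dotProduct, dotProduct_neg, neg_neg]
  ring

lemma isLeast_splitting_dotProduct_mulVec {B C : Matrix ι ι ℝ} (hB : B.PosSemidef)
    (hC : C.PosSemidef) (h : IsUnit (B + C).det) (q : ι → ℝ) :
    IsLeast {t | ∃ q₁ q₂ : ι → ℝ, q₁ + q₂ = q ∧ t = q₁ ⬝ᵥ B *ᵥ q₁ + q₂ ⬝ᵥ C *ᵥ q₂}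
      (q ⬝ᵥ (B * (B + C)⁻¹ * C) *ᵥ q) := by
  have hBs := isHermitian_iff_isSymm.mp hB.isHermitian
  have hCs := isHermitian_iff_isSymm.mp hC.isHermitian
  refine ⟨⟨_, _, inv_add_mul_mulVec_add h q, ?_⟩, ?_⟩
  · rw [dotProduct_mulVec_add_dotProduct_mulVec_of_add_eq hBs hCs h
      (inv_add_mul_mulVec_add h q), sub_self, zero_dotProduct, add_zero]
  · rintro t ⟨q₁, q₂, hq, rfl⟩
    rw [dotProduct_mulVec_add_dotProduct_mulVec_of_add_eq hBs hCs h hq, le_add_iff_nonneg_right]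
    simpa only [star_trivial] using
      (hB.add hC).dotProduct_mulVec_nonneg (q₁ - ((B + C)⁻¹ * C) *ᵥ q)

end Matrix

/-- The infimum over splittings of the sum of two positive definite quadratic forms is
the quadratic form of `B(B + C)⁻¹C` (Section 5.4). -/
theorem inf_splitting_eq_quadratic_form
    (n : ℕ) (B C : Matrix (Fin n) (Fin n) ℝ)
    (hB : B.PosDef) (hC : C.PosDef) :
    ∀ q : Fin n → ℝ,
      sInf {t : ℝ | ∃ q₁ q₂ : Fin n → ℝ, q₁ + q₂ = q ∧
          t = q₁ ⬝ᵥ B.mulVec q₁ + q₂ ⬝ᵥ C.mulVec q₂} =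
        q ⬝ᵥ (B * (B + C)⁻¹ * C).mulVec q := fun q =>
  (isLeast_splitting_dotProduct_mulVec hB.posSemidef hC.posSemidef
    ((isUnit_iff_isUnit_det _).mp (hB.add hC).isUnit) q).csInf_eq
end
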